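/- Sufficiency of λ''₁ > 0 for the maximum principle under bounded coefficients (Theorem 2.1(iii)). Suppose a, b and the negative part (c − ν)⁻ of x ↦ c(x) − ν(x,ℝ^d) are bounded on ℝ^d. If λ''₁(I) > 0, then I satisfies the maximum principle on ℝ^d. -/

import Mathlib

open MeasureTheory Metric Set

noncomputable section

/-- The nonlocal integro-differential operator `I`. -/
def Iop (d : ℕ) (a : EuclideanSpace ℝ (Fin d) → Matrix (Fin d) (Fin d) ℝ)
    (b : EuclideanSpace ℝ (Fin d) → EuclideanSpace ℝ (Fin d))
    (c : EuclideanSpace ℝ (Fin d) → ℝ)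
    (ν : EuclideanSpace ℝ (Fin d) → Measure (EuclideanSpace ℝ (Fin d)))
    (f : EuclideanSpace ℝ (Fin d) → ℝ) (x : EuclideanSpace ℝ (Fin d)) : ℝ :=
  (∑ i, ∑ j, a x i j *
      fderiv ℝ (fun y => fderiv ℝ f y (EuclideanSpace.single j (1:ℝ))) x
        (EuclideanSpace.single i (1:ℝ)))
    + fderiv ℝ f x (b x) + c x * f x + ∫ z, (f (x + z) - f x) ∂(ν x)

/-- Standing structural assumptions (Assumption 1.1 of the paper). -/
structure StandardAssumptions (d : ℕ)
    (a : EuclideanSpace ℝ (Fin d) → Matrix (Fin d) (Fin d) ℝ)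
    (b : EuclideanSpace ℝ (Fin d) → EuclideanSpace ℝ (Fin d))
    (c : EuclideanSpace ℝ (Fin d) → ℝ)
    (ν : EuclideanSpace ℝ (Fin d) → Measure (EuclideanSpace ℝ (Fin d))) : Prop where
  dim_pos : 1 ≤ d
  a_symm : ∀ x, (a x).IsSymm
  a_cont : ∀ i j, Continuous fun x => a x i j
  a_elliptic : ∀ K : Set (EuclideanSpace ℝ (Fin d)), IsCompact K → ∃ κ > (0:ℝ),
    ∀ x ∈ K, ∀ ξ : EuclideanSpace ℝ (Fin d),
      κ * ‖ξ‖ ^ 2 ≤ ∑ i, ∑ j, ξ i * a x i j * ξ j ∧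
      ∑ i, ∑ j, ξ i * a x i j * ξ j ≤ κ⁻¹ * ‖ξ‖ ^ 2
  b_meas : Measurable b
  c_meas : Measurable c
  b_locBdd : ∀ K : Set (EuclideanSpace ℝ (Fin d)), IsCompact K → ∃ M, ∀ x ∈ K, ‖b x‖ ≤ M
  c_locBdd : ∀ K : Set (EuclideanSpace ℝ (Fin d)), IsCompact K → ∃ M, ∀ x ∈ K, |c x| ≤ M
  nu_fin : ∀ x, IsFiniteMeasure (ν x)
  nu_locBdd : ∀ K : Set (EuclideanSpace ℝ (Fin d)), IsCompact K →
    ∃ M : ℝ, ∀ x ∈ K, (ν x Set.univ).toReal ≤ M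
  nu_locSupp : ∀ K : Set (EuclideanSpace ℝ (Fin d)), IsCompact K →
    ∃ K₁ : Set (EuclideanSpace ℝ (Fin d)), IsCompact K₁ ∧ ∀ x ∈ K, ν x K₁ᶜ = 0

/-- Generalized principal eigenvalue on all of `ℝ^d`. -/
def lam1 (d : ℕ) (L : (EuclideanSpace ℝ (Fin d) → ℝ) → EuclideanSpace ℝ (Fin d) → ℝ) : EReal :=
  sSup (Real.toEReal '' {l : ℝ | ∃ φ : EuclideanSpace ℝ (Fin d) → ℝ,
    ContDiff ℝ 2 φ ∧ (∀ x, 0 < φ x) ∧ ∀ x, L φ x + l * φ x ≤ 0})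

/-- Dirichlet principal eigenvalue on an open set `D`. -/
def lamD (d : ℕ) (L : (EuclideanSpace ℝ (Fin d) → ℝ) → EuclideanSpace ℝ (Fin d) → ℝ)
    (D : Set (EuclideanSpace ℝ (Fin d))) : EReal :=
  sSup (Real.toEReal '' {l : ℝ | ∃ φ : EuclideanSpace ℝ (Fin d) → ℝ,
    Continuous φ ∧ (∀ x, 0 ≤ φ x) ∧ ContDiffOn ℝ 2 φ D ∧ (∀ x ∈ D, 0 < φ x) ∧
    ∀ x ∈ D, L φ x + l * φ x ≤ 0})

/-- The eigenvalue `λ'₁`. -/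
def lamP1 (d : ℕ) (L : (EuclideanSpace ℝ (Fin d) → ℝ) → EuclideanSpace ℝ (Fin d) → ℝ) : EReal :=
  sInf (Real.toEReal '' {l : ℝ | ∃ φ : EuclideanSpace ℝ (Fin d) → ℝ,
    ContDiff ℝ 2 φ ∧ (∀ x, 0 < φ x) ∧ BddAbove (Set.range φ) ∧ ∀ x, 0 ≤ L φ x + l * φ x})

/-- The eigenvalue `λ''₁`. -/
def lamPP1 (d : ℕ) (L : (EuclideanSpace ℝ (Fin d) → ℝ) → EuclideanSpace ℝ (Fin d) → ℝ) : EReal :=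
  sSup (Real.toEReal '' {l : ℝ | ∃ φ : EuclideanSpace ℝ (Fin d) → ℝ,
    ContDiff ℝ 2 φ ∧ (∃ δ > (0:ℝ), ∀ x, δ ≤ φ x) ∧ ∀ x, L φ x + l * φ x ≤ 0})

/-- The eigenvalue `λ''(L, D)` for an open set `D`. -/
def lamPPD (d : ℕ) (L : (EuclideanSpace ℝ (Fin d) → ℝ) → EuclideanSpace ℝ (Fin d) → ℝ)
    (D : Set (EuclideanSpace ℝ (Fin d))) : EReal :=
  sSup (Real.toEReal '' {l : ℝ | ∃ φ : EuclideanSpace ℝ (Fin d) → ℝ,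
    Continuous φ ∧ ContDiffOn ℝ 2 φ D ∧ (∃ δ > (0:ℝ), ∀ x, δ ≤ φ x) ∧
    ∀ x ∈ D, L φ x + l * φ x ≤ 0})

/-- `L` satisfies the maximum principle on `ℝ^d`. -/
def MaxPrinciple (d : ℕ)
    (L : (EuclideanSpace ℝ (Fin d) → ℝ) → EuclideanSpace ℝ (Fin d) → ℝ) : Prop :=
  ∀ u : EuclideanSpace ℝ (Fin d) → ℝ, ContDiff ℝ 2 u → (∀ x, 0 ≤ L u x) →
    BddAbove (Set.range u) → ∀ x, u x ≤ 0

/-- Growth condition (E_growth). -/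
def EGrowth (d : ℕ) (a : EuclideanSpace ℝ (Fin d) → Matrix (Fin d) (Fin d) ℝ)
    (b : EuclideanSpace ℝ (Fin d) → EuclideanSpace ℝ (Fin d))
    (c : EuclideanSpace ℝ (Fin d) → ℝ) : Prop :=
  (∃ M, ∀ x, c x ≤ M) ∧
  (∃ M, ∀ x, ‖(Matrix.toEuclideanCLM (𝕜 := ℝ) (a x) :
      EuclideanSpace ℝ (Fin d) →L[ℝ] EuclideanSpace ℝ (Fin d))‖ ≤ M) ∧
  (∃ M, ∀ x : EuclideanSpace ℝ (Fin d), x ≠ 0 → (inner ℝ (b x) x : ℝ) / ‖x‖ ≤ M)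

/-- Growth condition (P_growth). -/
def PGrowth (d : ℕ) (a : EuclideanSpace ℝ (Fin d) → Matrix (Fin d) (Fin d) ℝ)
    (b : EuclideanSpace ℝ (Fin d) → EuclideanSpace ℝ (Fin d))
    (c : EuclideanSpace ℝ (Fin d) → ℝ) : Prop :=
  (∃ M, ∀ x, c x ≤ M) ∧
  (∃ M R, ∀ x : EuclideanSpace ℝ (Fin d), R ≤ ‖x‖ →
    ‖(Matrix.toEuclideanCLM (𝕜 := ℝ) (a x) :
      EuclideanSpace ℝ (Fin d) →L[ℝ] EuclideanSpace ℝ (Fin d))‖ / ‖x‖ ^ 2 ≤ M) ∧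
  (∃ M R, ∀ x : EuclideanSpace ℝ (Fin d), R ≤ ‖x‖ → (inner ℝ (b x) x : ℝ) / ‖x‖ ^ 2 ≤ M)

/-!
Take `l > 0` and `φ ≥ δ > 0` with `Iφ + lφ ≤ 0`. If `u` is bounded above, `Iu ≥ 0` and `u` is
positive somewhere, then for the critical multiple `t = sup (u / φ) > 0` the function
`v = u - tφ` satisfies `v ≤ 0`, `sup v = 0` and `Iv = Iu - tIφ ≥ tlδ` everywhere. This contradicts
the bounds on `a`, `b` and `(c - ν)⁻`: `v - αρ` attains its maximum at some `x₀` for the coercive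
penalty `ρ x = ∑ i, √(1 + x_i²)`, whose gradient and Hessian are bounded, and there
`Iv(x₀) ≤ α d (sup ‖a‖ + sup ‖b‖) + M (-v(x₀))` with `M ≥ (c - ν)⁻`, since `v ≤ 0` makes the
nonlocal term at most `-ν(x₀, ℝ^d) v(x₀)`. Both terms are small once `v(x₀)` is close to `0` and
`α` is small.
-/

open Filter Topology
open scoped MatrixOrder

theorem IsLocalMax.deriv_deriv_nonpos {ψ : ℝ → ℝ} {t : ℝ} (h : IsLocalMax ψ t)
    (hc : ContinuousAt ψ t) : deriv (deriv ψ) t ≤ 0 := by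
  by_contra! hpos
  have hconst : ∀ᶠ s in 𝓝 t, ψ s = ψ t :=
    (h.and (isLocalMin_of_deriv_deriv_pos hpos h.deriv_eq_zero hc)).mono
      fun s hs => le_antisymm hs.1 hs.2
  have hderiv : deriv ψ =ᶠ[𝓝 t] fun _ => 0 := by
    filter_upwards [hconst.eventually_nhds] with s hs
    simpa using Filter.EventuallyEq.deriv_eq (f := fun _ => ψ t) (f₁ := ψ) hs
  simp [hderiv.deriv_eq] at hpos

theorem ContDiff.differentiable_fderiv {F : Type*} [NormedAddCommGroup F] [NormedSpace ℝ F]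
    {f : F → ℝ} (hf : ContDiff ℝ 2 f) : Differentiable ℝ (fderiv ℝ f) :=
  (hf.fderiv_right (m := 1) (by norm_num)).differentiable (by norm_num)

theorem IsLocalMax.fderiv_fderiv_apply_self_nonpos {F : Type*} [NormedAddCommGroup F]
    [NormedSpace ℝ F] {f : F → ℝ} {x : F} (h : IsLocalMax f x) (hf : ContDiff ℝ 2 f) (ξ : F) :
    fderiv ℝ (fderiv ℝ f) x ξ ξ ≤ 0 := by
  have hline : ∀ s : ℝ, HasDerivAt (fun t : ℝ => x + t • ξ) ξ s := fun s => by
    simpa using ((hasDerivAt_id s).smul_const ξ).const_add x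
  have hf1 : Differentiable ℝ f := hf.differentiable (by norm_num)
  have hderiv : deriv (fun t : ℝ => f (x + t • ξ)) = fun t => fderiv ℝ f (x + t • ξ) ξ :=
    funext fun s => ((hf1 _).hasFDerivAt.comp_hasDerivAt s (hline s)).deriv
  have hderiv2 : HasDerivAt (fun t : ℝ => fderiv ℝ f (x + t • ξ) ξ)
      (fderiv ℝ (fderiv ℝ f) x ξ ξ) 0 := by
    simpa using ((hf.differentiable_fderiv _).hasFDerivAt.comp_hasDerivAt 0 (hline 0)).clm_apply
      (hasDerivAt_const 0 ξ)
  have hmax : IsLocalMax (fun t : ℝ => f (x + t • ξ)) 0 :=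
    IsLocalMax.comp_continuous (g := fun t : ℝ => x + t • ξ) (by simpa using h) (by fun_prop)
  simpa [hderiv, hderiv2.deriv] using
    hmax.deriv_deriv_nonpos (hf1.continuous.comp (by fun_prop)).continuousAt

theorem Matrix.PosSemidef.sum_mul_bilin_nonpos {n M : Type*} [Fintype n] [AddCommGroup M]
    [Module ℝ M] {A : Matrix n n ℝ} (hA : A.PosSemidef) (Q : LinearMap.BilinForm ℝ M)
    (hQ : ∀ ξ, Q ξ ξ ≤ 0) (e : n → M) : ∑ i, ∑ j, A i j * Q (e i) (e j) ≤ 0 := by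
  classical
  obtain ⟨B, rfl⟩ := CStarAlgebra.nonneg_iff_eq_star_mul_self.mp hA.nonneg
  calc ∑ i, ∑ j, (star B * B) i j * Q (e i) (e j)
      = ∑ i, ∑ j, ∑ k, B k i * B k j * Q (e i) (e j) := by
        simp [Matrix.mul_apply, Finset.sum_mul]
    _ = ∑ k, ∑ i, ∑ j, B k i * B k j * Q (e i) (e j) :=
        (Finset.sum_congr rfl fun i _ => Finset.sum_comm).trans Finset.sum_comm
    _ = ∑ k, Q (∑ i, B k i • e i) (∑ j, B k j • e j) := by
        simp only [map_sum, map_smul, LinearMap.sum_apply, LinearMap.smul_apply, smul_eq_mul,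
          Finset.mul_sum, mul_assoc]
        refine Finset.sum_congr rfl fun k _ => Finset.sum_comm.trans ?_
        exact Finset.sum_congr rfl fun _ _ => Finset.sum_congr rfl fun _ _ => mul_left_comm _ _ _
    _ ≤ 0 := Finset.sum_nonpos fun k _ => hQ _

theorem fderiv_add_const_mul {F : Type*} [NormedAddCommGroup F] [NormedSpace ℝ F]
    {f g : F → ℝ} (hf : Differentiable ℝ f) (hg : Differentiable ℝ g) (s : ℝ) :
    fderiv ℝ (fun y => f y + s * g y) = fun y => fderiv ℝ f y + s • fderiv ℝ g y :=
  funext fun y => by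
    rw [fderiv_fun_add (hf y) ((hg y).const_mul s), fderiv_const_mul (hg y)]

theorem Matrix.abs_apply_le_norm_toEuclideanCLM {n : Type*} [Fintype n] [DecidableEq n]
    (A : Matrix n n ℝ) (i j : n) :
    |A i j| ≤ ‖(Matrix.toEuclideanCLM (𝕜 := ℝ) A :
      EuclideanSpace ℝ n →L[ℝ] EuclideanSpace ℝ n)‖ := by
  set T : EuclideanSpace ℝ n →L[ℝ] EuclideanSpace ℝ n := Matrix.toEuclideanCLM (𝕜 := ℝ) A
  have hcol : T (EuclideanSpace.single j 1) i = A i j := by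
    change (A.mulVec (Pi.single j 1)) i = A i j
    simp
  calc |A i j| = ‖T (EuclideanSpace.single j 1) i‖ := by rw [hcol, Real.norm_eq_abs]
    _ ≤ ‖T (EuclideanSpace.single j 1)‖ := PiLp.norm_apply_le _ _
    _ ≤ ‖T‖ * ‖EuclideanSpace.single j (1 : ℝ)‖ := T.le_opNorm _
    _ = ‖T‖ := by simp

theorem Continuous.integrable_of_measure_compl_eq_zero {X : Type*} [TopologicalSpace X] [T2Space X]
    [MeasurableSpace X] [OpensMeasurableSpace X] {μ : Measure X} [IsFiniteMeasure μ]
    {f : X → ℝ} (hf : Continuous f) {K : Set X} (hK : IsCompact K) (hμK : μ Kᶜ = 0) :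
    Integrable f μ := by
  have hae : ∀ᵐ x ∂μ, x ∈ K := measure_eq_zero_iff_ae_notMem.mp hμK |>.mono fun _ hx => by
    simpa using hx
  simpa [IntegrableOn, Measure.restrict_eq_self_of_ae_mem hae] using
    hf.continuousOn.integrableOn_compact (μ := μ) hK

theorem exists_pos_isLUB_range_sub_mul_eq_zero {X : Type*} {u φ : X → ℝ} {δ : ℝ} (hδ : 0 < δ)
    (hφ : ∀ x, δ ≤ φ x) (hu : BddAbove (range u)) {x₀ : X} (hx₀ : 0 < u x₀) :
    ∃ t > 0, IsLUB (range fun x => u x - t * φ x) 0 := by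
  have : Nonempty X := ⟨x₀⟩
  have hφ0 : ∀ x, 0 < φ x := fun x => hδ.trans_le (hφ x)
  obtain ⟨M₀, hM₀⟩ := hu
  have hu_le : ∀ x, u x ≤ M₀ := fun x => hM₀ ⟨x, rfl⟩
  have hM₀ : 0 < M₀ := hx₀.trans_le (hu_le x₀)
  have hbdd : BddAbove (range fun x => u x / φ x) :=
    ⟨M₀ / δ, by rintro _ ⟨x, rfl⟩; exact div_le_div₀ hM₀.le (hu_le x) hδ (hφ x)⟩
  set t := ⨆ x, u x / φ x
  have hle : ∀ x, u x ≤ t * φ x := fun x => (div_le_iff₀ (hφ0 x)).mp (le_ciSup hbdd x)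
  have ht : 0 < t := (div_pos hx₀ (hφ0 x₀)).trans_le (le_ciSup hbdd x₀)
  refine ⟨t, ht, ?_, fun B hB => le_of_forall_pos_lt_add fun ε hε => ?_⟩
  · rintro _ ⟨x, rfl⟩
    linarith [hle x]
  -- at a point where `u / φ > t - ε t / (M₀ + ε)`, the bound `u ≤ M₀` forces `t φ < M₀ + ε`
  obtain ⟨y, hy⟩ := exists_lt_of_lt_ciSup (f := fun x => u x / φ x)
    (sub_lt_self t (by positivity : 0 < ε * t / (M₀ + ε)))
  have hy' : (t - ε * t / (M₀ + ε)) * φ y < u y := (lt_div_iff₀ (hφ0 y)).mp hy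
  have hkey : t * φ y * M₀ < (M₀ + ε) * M₀ := by
    have h : (t - ε * t / (M₀ + ε)) * (M₀ + ε) = t * M₀ := by field_simp; ring
    nlinarith [hu_le y, hφ0 y]
  have htφ : t * φ y < M₀ + ε := lt_of_mul_lt_mul_right hkey hM₀.le
  have hgap : ε * t / (M₀ + ε) * φ y < ε := by
    rw [div_mul_eq_mul_div, div_lt_iff₀ (by positivity)]
    nlinarith
  linarith [hB ⟨y, rfl⟩]

def bracket (t : ℝ) : ℝ := √(1 + t ^ 2)

theorem one_le_bracket (t : ℝ) : 1 ≤ bracket t :=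
  Real.one_le_sqrt.mpr (by nlinarith [sq_nonneg t])

theorem bracket_pos (t : ℝ) : 0 < bracket t := one_pos.trans_le (one_le_bracket t)

theorem abs_le_bracket (t : ℝ) : |t| ≤ bracket t := by
  rw [bracket, ← Real.sqrt_sq_eq_abs]
  exact Real.sqrt_le_sqrt (by linarith)

theorem sq_bracket (t : ℝ) : bracket t ^ 2 = 1 + t ^ 2 := Real.sq_sqrt (by positivity)

theorem contDiff_bracket : ContDiff ℝ 2 bracket :=
  contDiff_iff_contDiffAt.mpr fun t =>
    (Real.contDiffAt_sqrt (by positivity)).comp t (by fun_prop)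

theorem hasDerivAt_bracket (t : ℝ) : HasDerivAt bracket (t / bracket t) t := by
  refine (((hasDerivAt_pow 2 t).const_add 1).sqrt (by positivity)).congr_deriv ?_
  have := bracket_pos t
  simp only [bracket] at this ⊢
  field_simp
  norm_num

theorem hasDerivAt_div_bracket (t : ℝ) :
    HasDerivAt (fun s => s / bracket s) (bracket t ^ 3)⁻¹ t := by
  refine ((hasDerivAt_id' t).div (hasDerivAt_bracket t) (bracket_pos t).ne').congr_deriv ?_
  have := bracket_pos t
  field_simp
  rw [sq_bracket]
  ring

section Operator

variable {d : ℕ}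

local notation "E" => EuclideanSpace ℝ (Fin d)

def hessTrace (A : Matrix (Fin d) (Fin d) ℝ) (f : E → ℝ) (x : E) : ℝ :=
  ∑ i, ∑ j, A i j * fderiv ℝ (fun y => fderiv ℝ f y (EuclideanSpace.single j 1)) x
    (EuclideanSpace.single i 1)

theorem Iop_eq_hessTrace_add (a : E → Matrix (Fin d) (Fin d) ℝ) (b : E → E) (c : E → ℝ)
    (ν : E → Measure E) (f : E → ℝ) (x : E) :
    Iop d a b c ν f x = hessTrace (a x) f x + fderiv ℝ f x (b x) + c x * f x
      + ∫ z, (f (x + z) - f x) ∂(ν x) :=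
  rfl

theorem hessTrace_eq_sum_fderiv_fderiv (A : Matrix (Fin d) (Fin d) ℝ) {f : E → ℝ} {x : E}
    (hf : DifferentiableAt ℝ (fderiv ℝ f) x) :
    hessTrace A f x = ∑ i, ∑ j, A i j *
      fderiv ℝ (fderiv ℝ f) x (EuclideanSpace.single i 1) (EuclideanSpace.single j 1) := by
  refine Finset.sum_congr rfl fun i _ => Finset.sum_congr rfl fun j _ => ?_
  rw [fderiv_clm_apply hf (differentiableAt_const (EuclideanSpace.single j (1 : ℝ)))]
  simp

theorem Matrix.PosSemidef.hessTrace_nonpos {A : Matrix (Fin d) (Fin d) ℝ} (hA : A.PosSemidef)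
    {f : E → ℝ} (hf : ContDiff ℝ 2 f) {x : E} (h : IsLocalMax f x) : hessTrace A f x ≤ 0 := by
  rw [hessTrace_eq_sum_fderiv_fderiv A (hf.differentiable_fderiv x)]
  exact hA.sum_mul_bilin_nonpos (fderiv ℝ (fderiv ℝ f) x).toLinearMap₁₂
    (h.fderiv_fderiv_apply_self_nonpos hf) _

theorem hessTrace_add_const_mul (A : Matrix (Fin d) (Fin d) ℝ) {f g : E → ℝ}
    (hf : ContDiff ℝ 2 f) (hg : ContDiff ℝ 2 g) (s : ℝ) (x : E) :
    hessTrace A (fun y => f y + s * g y) x = hessTrace A f x + s * hessTrace A g x := by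
  have hD2 : fderiv ℝ (fderiv ℝ fun y => f y + s * g y) x
      = fderiv ℝ (fderiv ℝ f) x + s • fderiv ℝ (fderiv ℝ g) x := by
    rw [fderiv_add_const_mul (hf.differentiable (by norm_num)) (hg.differentiable (by norm_num)),
      fderiv_fun_add (hf.differentiable_fderiv x) ((hg.differentiable_fderiv x).fun_const_smul s),
      fderiv_fun_const_smul (hg.differentiable_fderiv x)]
  rw [hessTrace_eq_sum_fderiv_fderiv A (hf.differentiable_fderiv x),
    hessTrace_eq_sum_fderiv_fderiv A (hg.differentiable_fderiv x),
    hessTrace_eq_sum_fderiv_fderiv A ((hf.add (contDiff_const.mul hg)).differentiable_fderiv x),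
    hD2]
  simp only [add_apply, smul_apply, smul_eq_mul, Finset.mul_sum, ← Finset.sum_add_distrib]
  exact Finset.sum_congr rfl fun i _ => Finset.sum_congr rfl fun j _ => by ring

def coordBarrier (x : E) : ℝ := ∑ i, bracket (x i)

theorem contDiff_coordBarrier : ContDiff ℝ 2 (coordBarrier (d := d)) :=
  ContDiff.sum fun i _ => contDiff_bracket.comp (EuclideanSpace.proj (𝕜 := ℝ) i).contDiff

theorem coordBarrier_nonneg (x : E) : 0 ≤ coordBarrier x :=
  Finset.sum_nonneg fun _ _ => (bracket_pos _).le

theorem norm_le_coordBarrier (x : E) : ‖x‖ ≤ coordBarrier x := by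
  rw [EuclideanSpace.norm_eq, ← Real.sqrt_sq (coordBarrier_nonneg x)]
  refine Real.sqrt_le_sqrt ?_
  calc ∑ i, ‖x i‖ ^ 2 ≤ ∑ i, bracket (x i) ^ 2 :=
        Finset.sum_le_sum fun i _ => by
          rw [Real.norm_eq_abs, sq_le_sq₀ (abs_nonneg _) (bracket_pos _).le]
          exact abs_le_bracket _
    _ ≤ coordBarrier x ^ 2 :=
        Finset.sum_sq_le_sq_sum_of_nonneg fun i _ => (bracket_pos _).le

theorem hasFDerivAt_coordBarrier (x : E) :
    HasFDerivAt coordBarrier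
      (∑ i, (x i / bracket (x i)) • PiLp.proj (𝕜 := ℝ) 2 (fun _ : Fin d => ℝ) i) x :=
  HasFDerivAt.fun_sum fun i _ =>
    (hasDerivAt_bracket (x i)).comp_hasFDerivAt (h₂ := bracket) x (PiLp.hasFDerivAt_apply 2 x i)

theorem fderiv_coordBarrier_apply (x v : E) :
    fderiv ℝ coordBarrier x v = ∑ i, x i / bracket (x i) * v i := by
  simp [(hasFDerivAt_coordBarrier x).fderiv]

theorem fderiv_coordBarrier_apply_le (x v : E) : fderiv ℝ coordBarrier x v ≤ d * ‖v‖ := by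
  rw [fderiv_coordBarrier_apply]
  calc ∑ i, x i / bracket (x i) * v i ≤ ∑ _i : Fin d, ‖v‖ :=
        Finset.sum_le_sum fun i _ => by
          have hxi : |x i / bracket (x i)| ≤ 1 := by
            rw [abs_div, abs_of_pos (bracket_pos _), div_le_one (bracket_pos _)]
            exact abs_le_bracket _
          calc x i / bracket (x i) * v i ≤ |x i / bracket (x i)| * |v i| := by
                rw [← abs_mul]; exact le_abs_self _
            _ ≤ 1 * ‖v‖ := mul_le_mul hxi (PiLp.norm_apply_le v i) (abs_nonneg _) zero_le_one
            _ = ‖v‖ := one_mul _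
    _ = d * ‖v‖ := by simp

theorem hessTrace_coordBarrier (A : Matrix (Fin d) (Fin d) ℝ) (x : E) :
    hessTrace A coordBarrier x = ∑ i, A i i * (bracket (x i) ^ 3)⁻¹ := by
  have hpartial : ∀ j, (fun y : E => fderiv ℝ coordBarrier y (EuclideanSpace.single j 1))
      = fun y => y j / bracket (y j) := fun j => funext fun y => by
    simp [fderiv_coordBarrier_apply]
  have hpartial2 : ∀ i j, fderiv ℝ (fun y : E => y j / bracket (y j)) x
      (EuclideanSpace.single i 1) = if i = j then (bracket (x j) ^ 3)⁻¹ else 0 := fun i j => by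
    have h : HasFDerivAt (fun y : E => y j / bracket (y j))
        ((bracket (x j) ^ 3)⁻¹ • PiLp.proj (𝕜 := ℝ) 2 (fun _ : Fin d => ℝ) j) x :=
      (hasDerivAt_div_bracket (x j)).comp_hasFDerivAt (h₂ := fun s => s / bracket s) x
        (PiLp.hasFDerivAt_apply 2 x j)
    rw [h.fderiv]
    simp [eq_comm]
  simp [hessTrace, hpartial, hpartial2]

theorem hessTrace_coordBarrier_le {A : Matrix (Fin d) (Fin d) ℝ} {M : ℝ}
    (hA : ∀ i, |A i i| ≤ M) (x : E) : hessTrace A coordBarrier x ≤ d * M := by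
  rw [hessTrace_coordBarrier]
  calc ∑ i, A i i * (bracket (x i) ^ 3)⁻¹ ≤ ∑ _i : Fin d, M :=
        Finset.sum_le_sum fun i _ => by
          have h0 : 0 ≤ (bracket (x i) ^ 3)⁻¹ := by have := bracket_pos (x i); positivity
          have h1 : (bracket (x i) ^ 3)⁻¹ ≤ 1 :=
            inv_le_one_of_one_le₀ (one_le_pow₀ (one_le_bracket _))
          calc A i i * (bracket (x i) ^ 3)⁻¹ ≤ |A i i| * 1 :=
                mul_le_mul (le_abs_self _) h1 h0 (abs_nonneg _)
            _ ≤ M := by rw [mul_one]; exact hA i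
    _ = d * M := by simp

theorem exists_forall_sub_mul_coordBarrier_le {v : E → ℝ} (hv : Continuous v)
    (hv_bdd : BddAbove (range v)) {α : ℝ} (hα : 0 < α) :
    ∃ x₀, ∀ y, v y - α * coordBarrier y ≤ v x₀ - α * coordBarrier x₀ := by
  obtain ⟨C, hC⟩ := hv_bdd
  refine (hv.sub (continuous_const.mul contDiff_coordBarrier.continuous)).exists_forall_ge ?_
  refine tendsto_atBot_mono (fun y => ?_ : ∀ y, v y - α * coordBarrier y ≤ C + -(α * ‖y‖)) ?_
  · nlinarith [hC ⟨y, rfl⟩, norm_le_coordBarrier y]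
  · exact tendsto_atBot_add_const_left _ C
      (tendsto_neg_atTop_atBot.comp (tendsto_norm_cocompact_atTop.const_mul_atTop hα))

variable {a : EuclideanSpace ℝ (Fin d) → Matrix (Fin d) (Fin d) ℝ}
  {b : EuclideanSpace ℝ (Fin d) → EuclideanSpace ℝ (Fin d)} {c : EuclideanSpace ℝ (Fin d) → ℝ}
  {ν : EuclideanSpace ℝ (Fin d) → Measure (EuclideanSpace ℝ (Fin d))}

namespace StandardAssumptions

theorem posSemidef (H : StandardAssumptions d a b c ν) (x : E) : (a x).PosSemidef := by
  obtain ⟨κ, hκ, hell⟩ := H.a_elliptic {x} isCompact_singleton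
  refine .of_dotProduct_mulVec_nonneg (Matrix.isHermitian_iff_isSymm.mpr (H.a_symm x))
    fun ξ => ?_
  have h := (hell x rfl (WithLp.toLp 2 ξ)).1
  have hq : star ξ ⬝ᵥ (a x).mulVec ξ = ∑ i, ∑ j, ξ i * a x i j * ξ j := by
    simp [dotProduct, Matrix.mulVec, Finset.mul_sum, mul_assoc]
  rw [hq]
  exact le_trans (by positivity) h

theorem integrable_comp_add (H : StandardAssumptions d a b c ν) {f : E → ℝ} (hf : Continuous f)
    (x : E) : Integrable (fun z => f (x + z)) (ν x) := by
  obtain ⟨K, hK, hνK⟩ := H.nu_locSupp {x} isCompact_singleton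
  have := H.nu_fin x
  exact (hf.comp (continuous_const_add x)).integrable_of_measure_compl_eq_zero hK (hνK x rfl)

theorem Iop_add_const_mul (H : StandardAssumptions d a b c ν) {f g : E → ℝ}
    (hf : ContDiff ℝ 2 f) (hg : ContDiff ℝ 2 g) (s : ℝ) (x : E) :
    Iop d a b c ν (fun y => f y + s * g y) x = Iop d a b c ν f x + s * Iop d a b c ν g x := by
  have := H.nu_fin x
  have hIf : Integrable (fun z => f (x + z) - f x) (ν x) :=
    (H.integrable_comp_add hf.continuous x).sub (integrable_const _)
  have hIg : Integrable (fun z => g (x + z) - g x) (ν x) :=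
    (H.integrable_comp_add hg.continuous x).sub (integrable_const _)
  have hint : ∫ z, (f (x + z) + s * g (x + z) - (f x + s * g x)) ∂(ν x)
      = ∫ z, (f (x + z) - f x) ∂(ν x) + s * ∫ z, (g (x + z) - g x) ∂(ν x) := by
    rw [← integral_const_mul, ← integral_add hIf (hIg.const_mul s)]
    exact integral_congr_ae (Eventually.of_forall fun z => by ring)
  simp only [Iop_eq_hessTrace_add]
  rw [hessTrace_add_const_mul _ hf hg,
    fderiv_add_const_mul (hf.differentiable (by norm_num)) (hg.differentiable (by norm_num)), hint]
  simp only [add_apply, smul_apply, smul_eq_mul]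
  ring

theorem Iop_le_of_forall_sub_mul_coordBarrier_le (H : StandardAssumptions d a b c ν)
    {Ma Mb : ℝ} (hMa : ∀ x, ‖(Matrix.toEuclideanCLM (𝕜 := ℝ) (a x) : E →L[ℝ] E)‖ ≤ Ma)
    (hMb : ∀ x, ‖b x‖ ≤ Mb) {v : E → ℝ} (hv : ContDiff ℝ 2 v) (hv0 : ∀ x, v x ≤ 0)
    {α : ℝ} (hα : 0 ≤ α) {x₀ : E}
    (hx₀ : ∀ y, v y - α * coordBarrier y ≤ v x₀ - α * coordBarrier x₀) :
    Iop d a b c ν v x₀ ≤ α * (d * Ma + d * Mb) + (c x₀ - (ν x₀ univ).toReal) * v x₀ := by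
  set w := fun y => v y - α * coordBarrier y
  have hw : ContDiff ℝ 2 w := hv.sub (contDiff_const.mul contDiff_coordBarrier)
  have hmax : IsLocalMax w x₀ := Eventually.of_forall hx₀
  have hv_eq : v = fun y => w y + α * coordBarrier y := funext fun y => by simp [w]
  have hsecond : hessTrace (a x₀) v x₀ ≤ α * (d * Ma) := by
    rw [hv_eq, hessTrace_add_const_mul _ hw contDiff_coordBarrier]
    have hρ := hessTrace_coordBarrier_le
      (fun i => (Matrix.abs_apply_le_norm_toEuclideanCLM _ i i).trans (hMa x₀)) x₀
    nlinarith [(H.posSemidef x₀).hessTrace_nonpos hw hmax]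
  have hfirst : fderiv ℝ v x₀ (b x₀) ≤ α * (d * Mb) := by
    rw [hv_eq, fderiv_add_const_mul (hw.differentiable (by norm_num))
      (contDiff_coordBarrier.differentiable (by norm_num))]
    simp only [hmax.fderiv_eq_zero, zero_add, smul_apply, smul_eq_mul]
    have hρ := fderiv_coordBarrier_apply_le x₀ (b x₀)
    have hb : (d : ℝ) * ‖b x₀‖ ≤ d * Mb := by gcongr; exact hMb x₀
    nlinarith
  have hnonlocal : ∫ z, (v (x₀ + z) - v x₀) ∂(ν x₀) ≤ -((ν x₀ univ).toReal * v x₀) := by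
    have := H.nu_fin x₀
    rw [integral_sub (H.integrable_comp_add hv.continuous x₀) (integrable_const _),
      integral_const, smul_eq_mul, Measure.real]
    linarith [integral_nonpos (μ := ν x₀) fun z => hv0 (x₀ + z)]
  rw [Iop_eq_hessTrace_add]
  linarith

theorem exists_Iop_lt_of_isLUB_zero (H : StandardAssumptions d a b c ν)
    (ha_bdd : ∃ M : ℝ, ∀ x, ‖(Matrix.toEuclideanCLM (𝕜 := ℝ) (a x) : E →L[ℝ] E)‖ ≤ M)
    (hb_bdd : ∃ M : ℝ, ∀ x, ‖b x‖ ≤ M)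
    (hcν_bdd : ∃ M : ℝ, ∀ x, max (-(c x - (ν x Set.univ).toReal)) 0 ≤ M)
    {v : E → ℝ} (hv : ContDiff ℝ 2 v) (hv_sup : IsLUB (range v) 0) {η : ℝ} (hη : 0 < η) :
    ∃ x, Iop d a b c ν v x < η := by
  obtain ⟨Ma, hMa⟩ := ha_bdd
  obtain ⟨Mb, hMb⟩ := hb_bdd
  obtain ⟨M, hM⟩ := hcν_bdd
  have hMa0 : 0 ≤ Ma := (norm_nonneg _).trans (hMa 0)
  have hMb0 : 0 ≤ Mb := (norm_nonneg _).trans (hMb 0)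
  have hM0 : 0 ≤ M := (le_max_right _ _).trans (hM 0)
  have hv0 : ∀ x, v x ≤ 0 := fun x => hv_sup.1 ⟨x, rfl⟩
  set ε := η / (2 * (M + 1))
  obtain ⟨_, ⟨y, rfl⟩, hy, -⟩ := hv_sup.exists_between (neg_lt_zero.mpr (by positivity : 0 < ε))
  set C := d * Ma + d * Mb + M * coordBarrier y
  have hC : 0 ≤ C := by have := coordBarrier_nonneg y; positivity
  set α := η / (2 * (C + 1))
  have hα : 0 < α := by positivity
  obtain ⟨x₀, hx₀⟩ := exists_forall_sub_mul_coordBarrier_le hv.continuous ⟨0, hv_sup.1⟩ hα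
  have hIop := H.Iop_le_of_forall_sub_mul_coordBarrier_le hMa hMb hv hv0 hα.le hx₀
  have hgap : -v x₀ ≤ ε + α * coordBarrier y := by
    nlinarith [hx₀ y, coordBarrier_nonneg x₀]
  have hcν : (c x₀ - (ν x₀ univ).toReal) * v x₀ ≤ M * (ε + α * coordBarrier y) := by
    have := (le_max_left _ _).trans (hM x₀)
    nlinarith [hv0 x₀]
  have hαC : α * C < η / 2 := by
    rw [div_mul_eq_mul_div, div_lt_div_iff₀ (by positivity) two_pos]
    nlinarith
  have hMε : M * ε < η / 2 := by
    rw [mul_div_assoc', div_lt_div_iff₀ (by positivity) two_pos]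
    nlinarith
  exact ⟨x₀, by linarith⟩

end StandardAssumptions

theorem exists_supersolution_of_zero_lt_lamPP1 {L : (E → ℝ) → E → ℝ} (h : 0 < lamPP1 d L) :
    ∃ l > (0 : ℝ), ∃ φ : E → ℝ,
      ContDiff ℝ 2 φ ∧ (∃ δ > (0 : ℝ), ∀ x, δ ≤ φ x) ∧ ∀ x, L φ x + l * φ x ≤ 0 := by
  obtain ⟨_, ⟨l, hl, rfl⟩, hpos⟩ := lt_sSup_iff.mp h
  exact ⟨l, EReal.coe_pos.mp hpos, hl⟩

end Operator

theorem lamPP1_pos_implies_maxPrinciple_bounded_general (d : ℕ)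
    (a : EuclideanSpace ℝ (Fin d) → Matrix (Fin d) (Fin d) ℝ)
    (b : EuclideanSpace ℝ (Fin d) → EuclideanSpace ℝ (Fin d))
    (c : EuclideanSpace ℝ (Fin d) → ℝ)
    (ν : EuclideanSpace ℝ (Fin d) → Measure (EuclideanSpace ℝ (Fin d)))
    (H : StandardAssumptions d a b c ν)
    (ha_bdd : ∃ M : ℝ, ∀ x, ‖(Matrix.toEuclideanCLM (𝕜 := ℝ) (a x) :
      EuclideanSpace ℝ (Fin d) →L[ℝ] EuclideanSpace ℝ (Fin d))‖ ≤ M)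
    (hb_bdd : ∃ M : ℝ, ∀ x, ‖b x‖ ≤ M)
    (hcν_bdd : ∃ M : ℝ, ∀ x, max (-(c x - (ν x Set.univ).toReal)) 0 ≤ M)
    (hpos : (0 : EReal) < lamPP1 d (Iop d a b c ν)) :
    MaxPrinciple d (Iop d a b c ν) := by
  obtain ⟨l, hl, φ, hφ, ⟨δ, hδ, hφδ⟩, hφL⟩ := exists_supersolution_of_zero_lt_lamPP1 hpos
  intro u hu hIu hu_bdd x₀
  by_contra! hx₀
  obtain ⟨t, ht, hsup⟩ := exists_pos_isLUB_range_sub_mul_eq_zero hδ hφδ hu_bdd hx₀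
  have hv : ContDiff ℝ 2 fun x => u x - t * φ x := hu.sub (contDiff_const.mul hφ)
  obtain ⟨x, hx⟩ := H.exists_Iop_lt_of_isLUB_zero ha_bdd hb_bdd hcν_bdd hv hsup
    (η := t * l * δ) (by positivity)
  have hsplit : Iop d a b c ν u x = Iop d a b c ν (fun x => u x - t * φ x) x
      + t * Iop d a b c ν φ x := by
    simpa using H.Iop_add_const_mul hv hφ t x
  nlinarith [hIu x, mul_le_mul_of_nonneg_left (hφL x) ht.le,
    mul_le_mul_of_nonneg_left (hφδ x) (mul_pos ht hl).le]

/-- Theorem 2.1(iii): if `a`, `b` and `(c − ν)⁻` are bounded, then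
`λ''₁(I) > 0` implies the maximum principle. -/
theorem lamPP1_pos_implies_maxPrinciple_bounded (d : ℕ) (hd : 1 ≤ d)
    (a : EuclideanSpace ℝ (Fin d) → Matrix (Fin d) (Fin d) ℝ)
    (b : EuclideanSpace ℝ (Fin d) → EuclideanSpace ℝ (Fin d))
    (c : EuclideanSpace ℝ (Fin d) → ℝ)
    (ν : EuclideanSpace ℝ (Fin d) → Measure (EuclideanSpace ℝ (Fin d)))
    (H : StandardAssumptions d a b c ν)
    (ha_bdd : ∃ M : ℝ, ∀ x, ‖(Matrix.toEuclideanCLM (𝕜 := ℝ) (a x) :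
      EuclideanSpace ℝ (Fin d) →L[ℝ] EuclideanSpace ℝ (Fin d))‖ ≤ M)
    (hb_bdd : ∃ M : ℝ, ∀ x, ‖b x‖ ≤ M)
    (hcν_bdd : ∃ M : ℝ, ∀ x, max (-(c x - (ν x Set.univ).toReal)) 0 ≤ M)
    (hpos : (0 : EReal) < lamPP1 d (Iop d a b c ν)) :
    MaxPrinciple d (Iop d a b c ν) :=
  lamPP1_pos_implies_maxPrinciple_bounded_general d a b c ν H ha_bdd hb_bdd hcν_bdd hpos
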